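/- arXiv:1901.00634 — 6 statements merged into one kernel-verified Lean document; each statement's English description precedes it below -/
import Mathlib

section
/- Let E be an n-dimensional real inner product space, let ᾱ_0, ᾱ_1, …, ᾱ_n be nonzero vectors of E such that ᾱ_1, …, ᾱ_n form a basis of E, and let k_0, …, k_n be positive real numbers with k_0·ᾱ_0 + k_1·ᾱ_1 + ⋯ + k_n·ᾱ_n = 0. For each index e ∈ {0, 1, …, n}, the set {ᾱ_j : j ≠ e} is a basis of E, and one may define the fundamental weights relative to e as the unique vectors (ω^{(e)}_f)_{f ≠ e} satisfying ⟨ω^{(e)}_f, ᾱ_j^∨⟩ = δ_{fj} for all f, j ∈ {0,…,n}∖{e}, where ᾱ^∨ := 2ᾱ/‖ᾱ‖². Then for every e ∈ {1, …, n}: (a) ω^{(e)}_0 = −(k_0‖ᾱ_0‖²)/(k_e‖ᾱ_e‖²) · ω^{(0)}_e, and ω^{(e)}_f = ω^{(0)}_f − (k_f‖ᾱ_f‖²)/(k_e‖ᾱ_e‖²) · ω^{(0)}_e for all f ∈ {1,…,n}∖{e}; (b) conversely, ω^{(0)}_e = −(k_e‖ᾱ_e‖²)/(k_0‖ᾱ_0‖²)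 · ω^{(e)}_0, and ω^{(0)}_f = ω^{(e)}_f − (k_f‖ᾱ_f‖²)/(k_0‖ᾱ_0‖²) · ω^{(e)}_0 for all f ∈ {1,…,n}∖{e}. -/
/-!
Since `k e ≠ 0`, the relation `∑ k i • α i = 0` writes `α e` in terms of the other roots, so
every family `{α j : j ≠ e}` spans `E` and, having `n` members, is a basis. Pairing the relation
with a fundamental weight `ω^{(e)}_f` yields the one pairing that duality leaves free,
`⟪ω^{(e)}_f, α e⟫ = -k f ‖α f‖² / (2 k e)`. Hence both sides of each formula have the same inner
product with every `α j`, `j ≠ 0`, and so they agree; part (b) is part (a) with the vertices `0`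
and `e` exchanged.
-/

open RealInnerProductSpace

theorem ext_inner_right_of_span_eq_top {𝕜 E ι : Type*} [RCLike 𝕜] [NormedAddCommGroup E]
    [InnerProductSpace 𝕜 E] {v : ι → E} (hv : Submodule.span 𝕜 (Set.range v) = ⊤) {x y : E}
    (h : ∀ i, inner 𝕜 x (v i) = inner 𝕜 y (v i)) : x = y :=
  ext_inner_right 𝕜 (LinearMap.congr_fun (LinearMap.ext_on_range hv
    (f := innerₛₗ 𝕜 x) (g := innerₛₗ 𝕜 y) h))

section Relation

variable {K V ι : Type*} [Field K] [AddCommGroup V] [Module K V] [Fintype ι] [DecidableEq ι]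
  {v : ι → V} {c : ι → K}

theorem span_range_subtype_ne_eq_of_sum_smul_eq_zero (hrel : ∑ i, c i • v i = 0) {e : ι}
    (he : c e ≠ 0) :
    Submodule.span K (Set.range fun j : {j // j ≠ e} => v j) = Submodule.span K (Set.range v) := by
  refine le_antisymm (Submodule.span_mono (Set.range_comp_subset_range _ _)) ?_
  rw [Submodule.span_le]
  rintro _ ⟨i, rfl⟩
  obtain rfl | hi := eq_or_ne i e
  · have hve : v i = -(c i)⁻¹ • ∑ j : {j // j ≠ i}, c j • v j := by
      rw [Fintype.sum_eq_add_sum_subtype_ne _ i, ← eq_neg_iff_add_eq_zero] at hrel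
      rw [neg_smul, ← smul_neg, ← hrel, inv_smul_smul₀ he]
    rw [hve]
    exact Submodule.smul_mem _ _ (Submodule.sum_mem _ fun j _ =>
      Submodule.smul_mem _ _ (Submodule.subset_span ⟨j, rfl⟩))
  · exact Submodule.subset_span ⟨⟨i, hi⟩, rfl⟩

theorem linearIndependent_subtype_ne_of_sum_smul_eq_zero (hv : Submodule.span K (Set.range v) = ⊤)
    (hcard : Fintype.card ι = Module.finrank K V + 1) (hrel : ∑ i, c i • v i = 0) {e : ι}
    (he : c e ≠ 0) : LinearIndependent K (fun j : {j // j ≠ e} => v j) :=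
  linearIndependent_of_top_le_span_of_card_eq_finrank
    (by rw [span_range_subtype_ne_eq_of_sum_smul_eq_zero hrel he, hv])
    (by simp [Fintype.card_subtype_compl, hcard])

end Relation

section FundamentalWeights

variable {ι E : Type*} [DecidableEq ι] [NormedAddCommGroup E] [InnerProductSpace ℝ E]
  {α : ι → E} {k : ι → ℝ} {e : ι} {ω : ι → E}

/-- The fundamental weights relative to the vertex `e` are the values `ω f`, `f ≠ e`; the value
`ω e` is unconstrained. -/
def IsFundamentalWeights (α : ι → E) (e : ι) (ω : ι → E) : Prop :=
  ∀ f j, f ≠ e → j ≠ e → ⟪ω f, (2 / ‖α j‖ ^ 2) • α j⟫ = if f = j then 1 else 0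

namespace IsFundamentalWeights

theorem inner_root (hω : IsFundamentalWeights α e ω) (hα : ∀ i, α i ≠ 0) {f j : ι} (hf : f ≠ e)
    (hj : j ≠ e) : ⟪ω f, α j⟫ = if f = j then ‖α j‖ ^ 2 / 2 else 0 := by
  have hnorm : ‖α j‖ ≠ 0 := norm_ne_zero_iff.2 (hα j)
  have h := hω f j hf hj
  rw [real_inner_smul_right] at h
  split_ifs at h ⊢
  · rw [eq_div_iff two_ne_zero, ← mul_one (‖α j‖ ^ 2), ← h]
    field_simp
  · simpa [hnorm] using h

theorem inner_root_vertex [Fintype ι] (hω : IsFundamentalWeights α e ω) (hα : ∀ i, α i ≠ 0)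
    (hrel : ∑ i, k i • α i = 0) (he : k e ≠ 0) {f : ι} (hf : f ≠ e) :
    ⟪ω f, α e⟫ = -(k f * ‖α f‖ ^ 2) / (2 * k e) := by
  have h : ∑ i, k i * ⟪ω f, α i⟫ = 0 := by
    simpa [inner_sum, real_inner_smul_right] using congrArg (⟪ω f, ·⟫) hrel
  rw [Fintype.sum_eq_add_sum_subtype_ne _ e] at h
  simp only [fun j : {j // j ≠ e} => hω.inner_root hα hf j.2] at h
  rw [Fintype.sum_eq_single ⟨f, hf⟩ fun j hj => by simp [Ne.symm (Subtype.coe_ne_coe.2 hj)],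
    if_pos rfl] at h
  field_simp
  linarith

variable [Fintype ι] {a b : ι} {ωa ωb : ι → E}

theorem change_vertex_apply_vertex (hspan : Submodule.span ℝ (Set.range α) = ⊤)
    (hα : ∀ i, α i ≠ 0) (hrel : ∑ i, k i • α i = 0) (hka : k a ≠ 0) (hkb : k b ≠ 0) (hab : a ≠ b)
    (ha : IsFundamentalWeights α a ωa) (hb : IsFundamentalWeights α b ωb) :
    ωb a = (-(k a * ‖α a‖ ^ 2) / (k b * ‖α b‖ ^ 2)) • ωa b := by
  refine ext_inner_right_of_span_eq_top (v := fun j : {j // j ≠ a} => α j)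
    (by rw [span_range_subtype_ne_eq_of_sum_smul_eq_zero hrel hka, hspan]) ?_
  rintro ⟨j, hja⟩
  rw [real_inner_smul_left]
  obtain rfl | hjb := eq_or_ne j b
  · rw [hb.inner_root_vertex hα hrel hkb hab, ha.inner_root hα hab.symm hja, if_pos rfl]
    field_simp [norm_ne_zero_iff.2 (hα j)]
  · rw [hb.inner_root hα hab hjb, ha.inner_root hα hab.symm hja, if_neg hja.symm, if_neg hjb.symm,
      mul_zero]

theorem change_vertex_apply (hspan : Submodule.span ℝ (Set.range α) = ⊤)
    (hα : ∀ i, α i ≠ 0) (hrel : ∑ i, k i • α i = 0) (hka : k a ≠ 0) (hkb : k b ≠ 0) (hab : a ≠ b)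
    (ha : IsFundamentalWeights α a ωa) (hb : IsFundamentalWeights α b ωb) {f : ι} (hfa : f ≠ a)
    (hfb : f ≠ b) : ωb f = ωa f - ((k f * ‖α f‖ ^ 2) / (k b * ‖α b‖ ^ 2)) • ωa b := by
  refine ext_inner_right_of_span_eq_top (v := fun j : {j // j ≠ a} => α j)
    (by rw [span_range_subtype_ne_eq_of_sum_smul_eq_zero hrel hka, hspan]) ?_
  rintro ⟨j, hja⟩
  rw [inner_sub_left, real_inner_smul_left]
  obtain rfl | hjb := eq_or_ne j b
  · rw [hb.inner_root_vertex hα hrel hkb hfb, ha.inner_root hα hfa hja, ha.inner_root hα hja hja,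
      if_neg hfb, if_pos rfl]
    field_simp [norm_ne_zero_iff.2 (hα j)]
    ring
  · rw [hb.inner_root hα hfb hjb, ha.inner_root hα hfa hja, ha.inner_root hα hab.symm hja,
      if_neg hjb.symm, mul_zero, sub_zero]

end IsFundamentalWeights

end FundamentalWeights

/-- Change of fundamental weights between two vertices of the alcove of an affine
root system.  Here `E` is an `n`-dimensional real inner product space, the gradients
`ᾱ_0, …, ᾱ_n` are nonzero with `ᾱ_1, …, ᾱ_n` a basis, and `∑ k_i ᾱ_i = 0` with all
`k_i > 0`.  For each vertex `e` the family `{ᾱ_j : j ≠ e}` is linearly independent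
(hence a basis), and the fundamental weights `ω^{(e)}_f` (characterized by
`⟨ω^{(e)}_f, ᾱ_j^∨⟩ = δ_{fj}` for `f, j ≠ e`, with `ᾱ^∨ = (2/‖ᾱ‖²)ᾱ`) transform as
stated. -/
theorem fundamental_weights_change_of_vertex
    {E : Type*} [NormedAddCommGroup E] [InnerProductSpace ℝ E]
    (n : ℕ) (hdim : Module.finrank ℝ E = n)
    (α : Fin (n + 1) → E) (hα : ∀ i, α i ≠ 0)
    (hbasis : LinearIndependent ℝ (fun i : Fin n => α i.succ))
    (k : Fin (n + 1) → ℝ) (hk : ∀ i, 0 < k i)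
    (hrel : ∑ i, k i • α i = 0)
    (e : Fin (n + 1)) (he : e ≠ 0)
    (ω0 ωe : Fin (n + 1) → E)
    (hω0 : ∀ f j : Fin (n + 1), f ≠ 0 → j ≠ 0 →
      ⟪ω0 f, (2 / ‖α j‖ ^ 2) • α j⟫ = if f = j then 1 else 0)
    (hωe : ∀ f j : Fin (n + 1), f ≠ e → j ≠ e →
      ⟪ωe f, (2 / ‖α j‖ ^ 2) • α j⟫ = if f = j then 1 else 0) :
    (∀ e' : Fin (n + 1),
      LinearIndependent ℝ (fun j : {j : Fin (n + 1) // j ≠ e'} => α j)) ∧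
    ωe 0 = (-(k 0 * ‖α 0‖ ^ 2) / (k e * ‖α e‖ ^ 2)) • ω0 e ∧
    (∀ f : Fin (n + 1), f ≠ 0 → f ≠ e →
      ωe f = ω0 f - ((k f * ‖α f‖ ^ 2) / (k e * ‖α e‖ ^ 2)) • ω0 e) ∧
    ω0 e = (-(k e * ‖α e‖ ^ 2) / (k 0 * ‖α 0‖ ^ 2)) • ωe 0 ∧
    (∀ f : Fin (n + 1), f ≠ 0 → f ≠ e →
      ω0 f = ωe f - ((k f * ‖α f‖ ^ 2) / (k 0 * ‖α 0‖ ^ 2)) • ωe 0) := by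
  have hk_ne : ∀ i, k i ≠ 0 := fun i => (hk i).ne'
  have : Nonempty (Fin n) := by
    refine Fin.pos_iff_nonempty.1 (Nat.pos_of_ne_zero ?_)
    rintro rfl
    simp [hα, hk_ne] at hrel
  have hspan : Submodule.span ℝ (Set.range α) = ⊤ :=
    top_unique <| (hbasis.span_eq_top_of_card_eq_finrank (by simp [hdim])).ge.trans
      (Submodule.span_mono (Set.range_comp_subset_range _ _))
  have hω0 : IsFundamentalWeights α 0 ω0 := hω0
  have hωe : IsFundamentalWeights α e ωe := hωe
  refine ⟨fun e' => linearIndependent_subtype_ne_of_sum_smul_eq_zero hspan (by simp [hdim]) hrel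
      (hk_ne e'),
    hω0.change_vertex_apply_vertex hspan hα hrel (hk_ne 0) (hk_ne e) he.symm hωe,
    fun f hf0 hfe => hω0.change_vertex_apply hspan hα hrel (hk_ne 0) (hk_ne e) he.symm hωe hf0 hfe,
    hωe.change_vertex_apply_vertex hspan hα hrel (hk_ne e) (hk_ne 0) he hω0,
    fun f hf0 hfe => hωe.change_vertex_apply hspan hα hrel (hk_ne e) (hk_ne 0) he hω0 hfe hf0⟩
end

section
/- Let E be an n-dimensional real inner product space, let ᾱ_0, ᾱ_1, …, ᾱ_n be nonzero vectors of E such that ᾱ_1, …, ᾱ_n form a basis of E, and let k_0, …, k_n be positive real numbers with k_0·ᾱ_0 + ⋯ + k_n·ᾱ_n = 0. For each e ∈ {0,…,n} let (ω^{(e)}_f)_{f ≠ e} be the fundamental weights relative to e, and set Λ_e := the subgroup of E generated over ℤ by {ω^{(e)}_f : f ≠ e}. Then: (a) if for every i ∈ {1, …, n} the real number (k_i‖ᾱ_i‖²)/(k_0‖ᾱ_0‖²) is an integer, then Λ_0 ⊆ Λ_e for every e ∈ {1,…,n}; (b) if the numbers k_i‖ᾱ_i‖² are equal for all i ∈ {0,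 1, …, n}, then Λ_0 = Λ_e for every e ∈ {1,…,n}. -/
open RealInnerProductSpace

/-- Inclusion of weight lattices at different vertices of the alcove.  With the same
setup as the change-of-vertex lemma (nonzero gradients `ᾱ_0, …, ᾱ_n`, with
`ᾱ_1, …, ᾱ_n` a basis of the `n`-dimensional space `E`, positive labels `k_i` with
`∑ k_i ᾱ_i = 0`, and fundamental weights `ω^{(e)}_f` at each vertex `e`), let `Λ_e`
be the subgroup generated by `{ω^{(e)}_f : f ≠ e}`.  Then:
(a) if `(k_i‖ᾱ_i‖²)/(k_0‖ᾱ_0‖²)` is an integer for every `i ≥ 1`, then `Λ_0 ⊆ Λ_e`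
for every `e ≥ 1`; (b) if all the numbers `k_i‖ᾱ_i‖²` are equal, then `Λ_0 = Λ_e`
for every `e ≥ 1`. -/
theorem weight_lattice_at_zero_sub_weight_lattice_at_vertex
    {E : Type*} [NormedAddCommGroup E] [InnerProductSpace ℝ E]
    (n : ℕ) (hdim : Module.finrank ℝ E = n)
    (α : Fin (n + 1) → E) (hα : ∀ i, α i ≠ 0)
    (hbasis : LinearIndependent ℝ (fun i : Fin n => α i.succ))
    (k : Fin (n + 1) → ℝ) (hk : ∀ i, 0 < k i)
    (hrel : ∑ i, k i • α i = 0)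
    (ω : Fin (n + 1) → Fin (n + 1) → E)
    (hω : ∀ e f j : Fin (n + 1), f ≠ e → j ≠ e →
      ⟪ω e f, (2 / ‖α j‖ ^ 2) • α j⟫ = if f = j then 1 else 0)
    (Λ : Fin (n + 1) → AddSubgroup E)
    (hΛ : ∀ e, Λ e = AddSubgroup.closure {x | ∃ f, f ≠ e ∧ x = ω e f}) :
    ((∀ i : Fin (n + 1), i ≠ 0 →
        ∃ m : ℤ, (k i * ‖α i‖ ^ 2) / (k 0 * ‖α 0‖ ^ 2) = (m : ℝ)) →
      ∀ e : Fin (n + 1), e ≠ 0 → Λ 0 ≤ Λ e) ∧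
    ((∀ i : Fin (n + 1), k i * ‖α i‖ ^ 2 = k 0 * ‖α 0‖ ^ 2) →
      ∀ e : Fin (n + 1), e ≠ 0 → Λ 0 = Λ e) := by

  classical
  -- `n` is positive, since otherwise `k 0 • α 0 = 0` contradicts `α 0 ≠ 0`.
  have hn : n ≠ 0 := by
    rintro rfl
    have h := hrel
    rw [Fin.sum_univ_one] at h
    rcases smul_eq_zero.mp h with h | h
    · exact (hk 0).ne' h
    · exact hα 0 h
  haveI : Nonempty (Fin n) := ⟨⟨0, Nat.pos_of_ne_zero hn⟩⟩
  have hk0 : ∀ i, k i ≠ 0 := fun i => (hk i).ne'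
  have hα2 : ∀ i, ‖α i‖ ^ 2 ≠ 0 := fun i =>
    pow_ne_zero _ (norm_ne_zero_iff.mpr (hα i))
  have hspan : Submodule.span ℝ (Set.range fun i : Fin n => α i.succ) = ⊤ :=
    hbasis.span_eq_top_of_card_eq_finrank (by simp [hdim])
  -- Representation of any vector in terms of the fundamental weights at `e`.
  have key : ∀ (e : Fin (n + 1)) (v : E),
      v = ∑ g, (if g = e then (0 : ℝ) else ⟪v, (2 / ‖α g‖ ^ 2) • α g⟫) • ω e g := by
    intro e v
    set S := ∑ g, (if g = e then (0 : ℝ) else ⟪v, (2 / ‖α g‖ ^ 2) • α g⟫) • ω e g with hS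
    have hne : ∀ j, j ≠ e → ⟪v - S, α j⟫ = 0 := by
      intro j hj
      have h2 : ⟪S, (2 / ‖α j‖ ^ 2) • α j⟫ = ⟪v, (2 / ‖α j‖ ^ 2) • α j⟫ := by
        rw [hS, sum_inner, Finset.sum_eq_single j]
        · rw [real_inner_smul_left, hω e j j hj hj, if_pos rfl, if_neg hj, mul_one]
        · intro g _ hg
          rw [real_inner_smul_left]
          by_cases hge : g = e
          · rw [if_pos hge, zero_mul]
          · rw [hω e g j hge hj, if_neg hg, mul_zero]
        · intro h; exact absurd (Finset.mem_univ j) h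
      have h3 : ⟪v - S, (2 / ‖α j‖ ^ 2) • α j⟫ = 0 := by
        rw [inner_sub_left, h2, sub_self]
      rw [real_inner_smul_right] at h3
      rcases mul_eq_zero.mp h3 with h | h
      · exact absurd h (div_ne_zero two_ne_zero (hα2 j))
      · exact h
    have hall : ∀ j, ⟪v - S, α j⟫ = 0 := by
      intro j
      by_cases hj : j = e
      · subst hj
        have h0 : ⟪v - S, ∑ i, k i • α i⟫ = 0 := by rw [hrel, inner_zero_right]
        rw [inner_sum] at h0
        rw [Finset.sum_eq_single j] at h0
        · rw [real_inner_smul_right] at h0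
          rcases mul_eq_zero.mp h0 with h | h
          · exact absurd h (hk0 j)
          · exact h
        · intro g _ hg
          rw [real_inner_smul_right, hne g hg, mul_zero]
        · intro h; exact absurd (Finset.mem_univ j) h
      · exact hne j hj
    have hzero : v - S = 0 := by
      have horth : ∀ x : E, ⟪v - S, x⟫ = 0 := by
        intro x
        have hx : x ∈ Submodule.span ℝ (Set.range fun i : Fin n => α i.succ) := by
          rw [hspan]; exact Submodule.mem_top
        induction hx using Submodule.span_induction with
        | mem y hy => obtain ⟨i, rfl⟩ := hy; exact hall _
        | zero => exact inner_zero_right _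
        | add y z hy hz ihy ihz => rw [inner_add_right, ihy, ihz, add_zero]
        | smul c y hy ihy => rw [real_inner_smul_right, ihy, mul_zero]
      exact inner_self_eq_zero.mp (horth (v - S))
    exact (sub_eq_zero.mp hzero)
  -- Pairing of a fundamental weight at `d` with the coroot of `α d`.
  have pairC : ∀ d f : Fin (n + 1), f ≠ d →
      ⟪ω d f, (2 / ‖α d‖ ^ 2) • α d⟫
        = -((k f * ‖α f‖ ^ 2) / (k d * ‖α d‖ ^ 2)) := by
    intro d f hf
    have hterm : ∀ i, i ≠ d → ⟪ω d f, α i⟫ = if f = i then ‖α i‖ ^ 2 / 2 else 0 := by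
      intro i hi
      have h := hω d f i hf hi
      rw [real_inner_smul_right] at h
      by_cases hfi : f = i
      · rw [if_pos hfi] at h ⊢
        have h4 : (2 / ‖α i‖ ^ 2) * ⟪ω d f, α i⟫ * (‖α i‖ ^ 2 / 2)
            = 1 * (‖α i‖ ^ 2 / 2) := by rw [h]
        have h5 : (2 / ‖α i‖ ^ 2) * (‖α i‖ ^ 2 / 2) = 1 := by
          rw [div_mul_div_comm, mul_comm, div_self (mul_ne_zero (hα2 i) two_ne_zero)]
        calc ⟪ω d f, α i⟫
            = (2 / ‖α i‖ ^ 2) * ⟪ω d f, α i⟫ * (‖α i‖ ^ 2 / 2) := by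
              rw [mul_comm (2 / ‖α i‖ ^ 2) ⟪ω d f, α i⟫, mul_assoc, h5, mul_one]
          _ = ‖α i‖ ^ 2 / 2 := by rw [h4, one_mul]
      · rw [if_neg hfi] at h ⊢
        rcases mul_eq_zero.mp h with h | h
        · exact absurd h (div_ne_zero two_ne_zero (hα2 i))
        · exact h
    have h0 : ⟪ω d f, ∑ i, k i • α i⟫ = 0 := by rw [hrel, inner_zero_right]
    rw [inner_sum] at h0
    have hsum : ∑ i, k i * ⟪ω d f, α i⟫ = 0 := by
      calc ∑ i, k i * ⟪ω d f, α i⟫ = ∑ i, ⟪ω d f, k i • α i⟫ := by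
            simp [real_inner_smul_right]
        _ = 0 := h0
    have hsplit : k d * ⟪ω d f, α d⟫
        + ∑ i ∈ Finset.univ.erase d, k i * ⟪ω d f, α i⟫ = 0 :=
      (Finset.add_sum_erase Finset.univ (fun i => k i * ⟪ω d f, α i⟫)
        (Finset.mem_univ d)).trans hsum
    have hrest : ∑ i ∈ Finset.univ.erase d, k i * ⟪ω d f, α i⟫
        = k f * (‖α f‖ ^ 2 / 2) := by
      rw [Finset.sum_congr rfl (fun i hi => by
        rw [hterm i (Finset.ne_of_mem_erase hi)])]
      rw [show (fun i => k i * if f = i then ‖α i‖ ^ 2 / 2 else 0)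
          = (fun i => if i = f then k i * (‖α i‖ ^ 2 / 2) else 0) from ?_,
        Finset.sum_ite_eq' (Finset.univ.erase d) f (fun i => k i * (‖α i‖ ^ 2 / 2))]
      · rw [if_pos (Finset.mem_erase.mpr ⟨hf, Finset.mem_univ f⟩)]
      · funext i
        by_cases h : f = i
        · subst h; rw [if_pos rfl, if_pos rfl]
        · rw [if_neg h, if_neg (fun h' => h h'.symm), mul_zero]
    have hXd : ⟪ω d f, α d⟫ = -(k f * (‖α f‖ ^ 2 / 2)) / k d := by
      rw [hrest] at hsplit
      rw [eq_div_iff (hk0 d)]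
      linear_combination hsplit
    rw [real_inner_smul_right, hXd]
    field_simp
  -- Integrality criterion for membership in `Λ e`.
  have memD : ∀ (e : Fin (n + 1)) (v : E),
      (∀ g, ∃ m : ℤ, g ≠ e → ⟪v, (2 / ‖α g‖ ^ 2) • α g⟫ = (m : ℝ)) → v ∈ Λ e := by
    intro e v hv
    choose m hm using hv
    rw [hΛ]
    have hrepr : v = ∑ g, (if g = e then (0 : ℝ) else (m g : ℝ)) • ω e g := by
      rw [key e v]
      refine Finset.sum_congr rfl fun g _ => ?_
      by_cases hg : g = e
      · rw [if_pos hg, if_pos hg]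
      · rw [if_neg hg, if_neg hg, hm g hg]
    rw [hrepr]
    refine AddSubgroup.sum_mem _ fun g _ => ?_
    by_cases hg : g = e
    · rw [if_pos hg, zero_smul]
      exact AddSubgroup.zero_mem _
    · rw [if_neg hg, Int.cast_smul_eq_zsmul]
      have hmem : ω e g ∈ ({x | ∃ f, f ≠ e ∧ x = ω e f} : Set E) := ⟨g, hg, rfl⟩
      exact AddSubgroup.zsmul_mem _ (AddSubgroup.subset_closure hmem) _
  -- Part (a).
  have partA : (∀ i : Fin (n + 1), i ≠ 0 →
      ∃ m : ℤ, (k i * ‖α i‖ ^ 2) / (k 0 * ‖α 0‖ ^ 2) = (m : ℝ)) →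
      ∀ e : Fin (n + 1), e ≠ 0 → Λ 0 ≤ Λ e := by
    intro hint e he
    rw [hΛ 0]
    refine (AddSubgroup.closure_le _).mpr ?_
    rintro x ⟨f, hf, rfl⟩
    refine memD e (ω 0 f) ?_
    intro g
    by_cases hg0 : g = 0
    · subst hg0
      obtain ⟨mm, hmm⟩ := hint f hf
      refine ⟨-mm, fun _ => ?_⟩
      rw [pairC 0 f hf, hmm]; push_cast; ring
    · refine ⟨if f = g then 1 else 0, fun _ => ?_⟩
      rw [hω 0 f g hf hg0]; split <;> simp
  refine ⟨partA, ?_⟩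
  -- Part (b).
  intro heq e he
  refine le_antisymm (partA (fun i _ => ⟨1, ?_⟩) e he) ?_
  · rw [heq i, Int.cast_one,
      div_self (mul_ne_zero (hk0 0) (hα2 0))]
  · rw [hΛ e]
    refine (AddSubgroup.closure_le _).mpr ?_
    rintro x ⟨f, hf, rfl⟩
    refine memD 0 (ω e f) ?_
    intro g
    by_cases hge : g = e
    · subst hge
      refine ⟨-1, fun _ => ?_⟩
      rw [pairC g f hf, heq f, heq g,
        div_self (mul_ne_zero (hk0 0) (hα2 0))]
      norm_num
    · refine ⟨if f = g then 1 else 0, fun _ => ?_⟩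
      rw [hω e f g hf hge]; split <;> simp
end

section
/- Fix an even integer n ≥ 2 and an integer k ≥ 1. Let Λ_M be the subgroup of ℤ^n generated by the n−1 vectors α_i + α_{i+1} (1 ≤ i ≤ n−1) together with k·e_{n−1}. Then the following are equivalent: (i) k divides n+1; (ii) α_2 + α_3 + ⋯ + α_n ∈ Λ_M (equivalently, −(ᾱ_0 + α_1) ∈ Λ_M); (iii) α_1 + α_2 + ⋯ + α_{n−1} ∈ Λ_M (equivalently, −(ᾱ_0 + α_n) ∈ Λ_M). -/
/-- The simple roots of the root system `A_n`, written in the coordinates of the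
fundamental weights (identifying the weight lattice with `ℤ^n` via `ω_i ↦ e_i`);
`ArootA n i` (0-based `i`) is the simple root `α_{i+1}`, the `(i+1)`-st column of
the Cartan matrix of `A_n`. -/
def ArootA (n : ℕ) (i : Fin n) : Fin n → ℤ := fun j =>
  if j = i then 2
  else if (j : ℕ) + 1 = (i : ℕ) ∨ (i : ℕ) + 1 = (j : ℕ) then -1
  else 0

def Qv (n : ℕ) (m : ℕ) : Fin n → ℤ :=
  if h : 1 ≤ m ∧ m ≤ n then Pi.single ⟨m - 1, by omega⟩ 1 else 0

def ccoef (n : ℕ) (m : ℕ) : ℤ :=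
  if 1 ≤ m ∧ m ≤ n then 2 * (m : ℤ) - n - 1 + ((n : ℤ) + 1) * (-1) ^ m else 0

def fhom (n : ℕ) : (Fin n → ℤ) →+ ℤ where
  toFun v := ∑ j : Fin n, ccoef n ((j : ℕ) + 1) * v j
  map_zero' := by simp
  map_add' v w := by simp [mul_add, Finset.sum_add_distrib]

lemma fhom_Q (n m : ℕ) : fhom n (Qv n m) = ccoef n m := by
  unfold fhom Qv
  split_ifs with h
  · simp only [AddMonoidHom.coe_mk, ZeroHom.coe_mk]
    rw [Finset.sum_eq_single (⟨m - 1, by omega⟩ : Fin n)]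
    · rw [Pi.single_eq_same, mul_one]
      have : ((⟨m - 1, by omega⟩ : Fin n) : ℕ) + 1 = m := by
        simp only [Fin.val_mk]; omega
      rw [this]
    · intro b _ hb
      rw [Pi.single_eq_of_ne hb, mul_zero]
    · simp
  · simp [ccoef, h]

lemma aroot_Q (n : ℕ) (i : Fin n) :
    ArootA n i = -Qv n i + 2 • Qv n (i + 1) + -Qv n (i + 2) := by
  funext j
  simp only [ArootA, Qv, Pi.add_apply, Pi.neg_apply, Pi.smul_apply, smul_eq_mul]
  split_ifs <;>
    simp_all [Pi.single_apply, Fin.ext_iff] <;>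
    (try split_ifs) <;> omega

lemma tele1 {V : Type*} [AddCommGroup V] (Q : ℕ → V) (m : ℕ) :
    ∑ i ∈ Finset.range m, (-Q i + 2 • Q (i + 1) + -Q (i + 2))
      = -Q 0 + Q 1 + Q m + -Q (m + 1) := by
  induction m with
  | zero => simp
  | succ m ih => rw [Finset.sum_range_succ, ih]; abel

lemma tele2 {V : Type*} [AddCommGroup V] (Q : ℕ → V) (hQ : Q 0 = 0) (r : ℤ) (m : ℕ) :
    ∑ i ∈ Finset.range m, ((i : ℤ) + r) • (-Q i + Q (i + 1) + Q (i + 2) + -Q (i + 3))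
      = ((m : ℤ) + r) • Q m + Q (m + 1) + -(((m : ℤ) + r - 1) • Q (m + 2))
        + -Q 1 + (r - 1) • Q 2 := by
  induction m with
  | zero => simp [hQ]
  | succ m ih =>
      rw [Finset.sum_range_succ, ih]
      push_cast
      module

lemma cc_g (n : ℕ) (hn : 2 ≤ n) (hneven : Even n) (i : ℕ) (h : i + 1 < n) :
    -ccoef n i + ccoef n (i + 1) + ccoef n (i + 2) + -(ccoef n (i + 3)) = 0 := by
  have p1 : (-1 : ℤ) ^ (i + 1) = -(-1) ^ i := by rw [pow_succ]; ring
  have p2 : (-1 : ℤ) ^ (i + 2) = (-1) ^ i := by rw [pow_succ, pow_succ]; ring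
  have p3 : (-1 : ℤ) ^ (i + 3) = -(-1) ^ i := by rw [pow_succ, p2]; ring
  unfold ccoef
  by_cases h1 : 1 ≤ i
  · by_cases h3 : i + 3 ≤ n
    · rw [if_pos ⟨by omega, by omega⟩, if_pos ⟨by omega, by omega⟩,
        if_pos ⟨by omega, by omega⟩, if_pos ⟨by omega, by omega⟩, p1, p2, p3]
      push_cast
      ring
    · have hn2 : n = i + 2 := by omega
      subst hn2
      have hevi : Even i := by
        rcases hneven with ⟨p, hp⟩; exact ⟨p - 1, by omega⟩
      have hpow : (-1 : ℤ) ^ i = 1 := Even.neg_one_pow hevi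
      rw [if_pos ⟨by omega, by omega⟩, if_pos ⟨by omega, by omega⟩,
        if_pos ⟨by omega, by omega⟩, if_neg (by omega), p1, p2, hpow]
      push_cast
      ring
  · have hi0 : i = 0 := by omega
    subst hi0
    by_cases hn3 : 3 ≤ n
    · rw [if_neg (by omega), if_pos ⟨by omega, by omega⟩,
        if_pos ⟨by omega, by omega⟩, if_pos ⟨by omega, by omega⟩]
      norm_num
      ring
    · have hn2 : n = 2 := by omega
      subst hn2
      norm_num

lemma cc_pen (n : ℕ) (hn : 2 ≤ n) (hneven : Even n) : ccoef n (n - 1) = -4 := by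
  have hodd : Odd (n - 1) := by
    rcases hneven with ⟨p, hp⟩; exact ⟨p - 1, by omega⟩
  have hpow : (-1 : ℤ) ^ (n - 1) = -1 := Odd.neg_one_pow hodd
  have hc : ((n - 1 : ℕ) : ℤ) = (n : ℤ) - 1 := by omega
  rw [ccoef, if_pos ⟨by omega, by omega⟩, hc, hpow]
  ring

/-- Case `A_n^{(1)}`, `n` even: let `Λ_M ⊆ ℤ^n` be generated by the sums of
neighboring simple roots `α_i + α_{i+1}` (`1 ≤ i ≤ n-1`) together with `k·ω_{n-1}`
(the vector `k·e_{n-1}`, 0-based index `n-2`).  Then the following are equivalent: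
(i) `k ∣ n+1`; (ii) `α_2 + ⋯ + α_n ∈ Λ_M` (i.e. `-(ᾱ_0 + α_1) ∈ Λ_M`);
(iii) `α_1 + ⋯ + α_{n-1} ∈ Λ_M` (i.e. `-(ᾱ_0 + α_n) ∈ Λ_M`). -/
theorem model_lattice_An_even_iff_dvd
    (n : ℕ) (hn : 2 ≤ n) (hneven : Even n) (k : ℤ) (hk : 1 ≤ k)
    (Λ : AddSubgroup (Fin n → ℤ))
    (hΛ : Λ = AddSubgroup.closure
      ({v | ∃ (i : ℕ) (h : i + 1 < n),
          v = ArootA n ⟨i, by omega⟩ + ArootA n ⟨i + 1, h⟩} ∪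
       {k • Pi.single (⟨n - 2, by omega⟩ : Fin n) (1 : ℤ)})) :
    ((k ∣ (n : ℤ) + 1) ↔
      (∑ i ∈ Finset.univ.filter (fun i : Fin n => (i : ℕ) ≠ 0), ArootA n i) ∈ Λ) ∧
    ((k ∣ (n : ℤ) + 1) ↔
      (∑ i ∈ Finset.univ.filter (fun i : Fin n => (i : ℕ) + 1 < n), ArootA n i) ∈ Λ) := by
  subst hΛ
  set Q : ℕ → (Fin n → ℤ) := Qv n with hQdef
  have hQ0 : Q 0 = 0 := by simp [hQdef, Qv]
  have hQtop : Q (n + 1) = 0 := by rw [hQdef, Qv, dif_neg (by omega)]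
  set S : Set (Fin n → ℤ) :=
      ({v | ∃ (i : ℕ) (h : i + 1 < n),
          v = ArootA n ⟨i, by omega⟩ + ArootA n ⟨i + 1, h⟩} ∪
       {k • Pi.single (⟨n - 2, by omega⟩ : Fin n) (1 : ℤ)}) with hSdef
  -- structure of the generators
  have groot : ∀ (i : ℕ) (h : i + 1 < n),
      ArootA n ⟨i, by omega⟩ + ArootA n ⟨i + 1, h⟩
        = -Q i + Q (i + 1) + Q (i + 2) + -Q (i + 3) := by
    intro i h
    rw [aroot_Q n ⟨i, by omega⟩, aroot_Q n ⟨i + 1, h⟩]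
    simp only [Fin.val_mk, hQdef]
    abel
  have hg_mem : ∀ (i : ℕ), i + 1 < n →
      (-Q i + Q (i + 1) + Q (i + 2) + -Q (i + 3)) ∈ AddSubgroup.closure S := by
    intro i h
    exact AddSubgroup.subset_closure (Set.mem_union_left _ ⟨i, h, (groot i h).symm⟩)
  -- sum of all simple roots
  have hsum_all : (∑ i : Fin n, ArootA n i) = Q 1 + Q n := by
    have : (∑ i : Fin n, ArootA n i)
        = ∑ i ∈ Finset.range n, (-Q i + 2 • Q (i + 1) + -Q (i + 2)) := by
      rw [← Fin.sum_univ_eq_sum_range (fun m => -Q m + 2 • Q (m + 1) + -Q (m + 2)) n]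
      exact Finset.sum_congr rfl fun i _ => aroot_Q n i
    rw [this, tele1, hQ0, hQtop]
    abel
  -- the two target sums
  have hT2 : (∑ i ∈ Finset.univ.filter (fun i : Fin n => (i : ℕ) ≠ 0), ArootA n i)
      = Q n + -Q 1 + Q 2 := by
    have hfil : Finset.univ.filter (fun i : Fin n => (i : ℕ) ≠ 0)
        = Finset.univ \ {(⟨0, by omega⟩ : Fin n)} := by
      ext j
      simp [Fin.ext_iff]
    rw [hfil, Finset.sum_sdiff_eq_sub (Finset.subset_univ _), Finset.sum_singleton,
      hsum_all, aroot_Q n ⟨0, by omega⟩]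
    simp only [Fin.val_mk, hQdef]
    rw [← hQdef, hQ0]
    abel
  have hT3 : (∑ i ∈ Finset.univ.filter (fun i : Fin n => (i : ℕ) + 1 < n), ArootA n i)
      = Q 1 + Q (n - 1) + -Q n := by
    have hfil : Finset.univ.filter (fun i : Fin n => (i : ℕ) + 1 < n)
        = Finset.univ \ {(⟨n - 1, by omega⟩ : Fin n)} := by
      ext j
      simp only [Finset.mem_filter, Finset.mem_univ, true_and, Finset.mem_sdiff,
        Finset.mem_singleton, Fin.ext_iff, Fin.val_mk]
      have := j.isLt
      omega
    rw [hfil, Finset.sum_sdiff_eq_sub (Finset.subset_univ _), Finset.sum_singleton,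
      hsum_all, aroot_Q n ⟨n - 1, by omega⟩]
    simp only [Fin.val_mk, hQdef]
    rw [← hQdef]
    have e1 : n - 1 + 1 = n := by omega
    have e2 : n - 1 + 2 = n + 1 := by omega
    rw [e1, e2, hQtop]
    abel
  -- penultimate basis vector
  have hQpen : Q (n - 1) = Pi.single (⟨n - 2, by omega⟩ : Fin n) (1 : ℤ) := by
    rw [hQdef, Qv, dif_pos ⟨by omega, by omega⟩]
    congr 1
  have hgen : k • Pi.single (⟨n - 2, by omega⟩ : Fin n) (1 : ℤ) ∈ AddSubgroup.closure S :=
    AddSubgroup.subset_closure (Set.mem_union_right _ rfl)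
  -- the two telescoped sums of generators
  have hc1 : ((n - 1 : ℕ) : ℤ) = (n : ℤ) - 1 := by omega
  have hsumgen : ∀ r : ℤ,
      (∑ i ∈ Finset.range (n - 1), ((i : ℤ) + r) • (-Q i + Q (i + 1) + Q (i + 2) + -Q (i + 3)))
        ∈ AddSubgroup.closure S := by
    intro r
    refine sum_mem fun i hi => AddSubgroup.zsmul_mem _ ?_ _
    exact hg_mem i (by have := Finset.mem_range.mp hi; omega)
  have en1 : n - 1 + 1 = n := by omega
  have en2 : n - 1 + 2 = n + 1 := by omega
  have hI : (∑ i ∈ Finset.range (n - 1),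
        ((i : ℤ) + 2) • (-Q i + Q (i + 1) + Q (i + 2) + -Q (i + 3)))
      = ((n : ℤ) + 1) • Q (n - 1) + (Q n + -Q 1 + Q 2) := by
    rw [tele2 Q hQ0 2 (n - 1), hc1, en1, en2, hQtop, smul_zero, neg_zero,
      show ((n : ℤ) - 1 + 2) = (n : ℤ) + 1 from by ring,
      show ((2 : ℤ) - 1) = 1 from by norm_num, one_smul]
    abel
  have hII : (∑ i ∈ Finset.range (n - 1),
        ((i : ℤ) + 1) • (-Q i + Q (i + 1) + Q (i + 2) + -Q (i + 3)))
      = ((n : ℤ) + 1) • Q (n - 1) + -(Q 1 + Q (n - 1) + -Q n) := by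
    rw [tele2 Q hQ0 1 (n - 1), hc1, en1, en2, hQtop, smul_zero, neg_zero,
      show ((n : ℤ) - 1 + 1) = (n : ℤ) from by ring,
      show ((1 : ℤ) - 1) = 0 from by norm_num, zero_smul, add_zero,
      show ((n : ℤ) + 1) • Q (n - 1) = (n : ℤ) • Q (n - 1) + Q (n - 1) from by
        rw [add_smul, one_smul]]
    abel
  -- the core equivalence
  have hcore : ((n : ℤ) + 1) • Q (n - 1) ∈ AddSubgroup.closure S ↔ k ∣ (n : ℤ) + 1 := by
    constructor
    · intro hmem
      have hle : AddSubgroup.closure S ≤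
          (AddSubgroup.zmultiples (4 * k)).comap (fhom n) := by
        rw [AddSubgroup.closure_le]
        rintro v (⟨i, hi, rfl⟩ | hv)
        · have : fhom n (ArootA n ⟨i, by omega⟩ + ArootA n ⟨i + 1, hi⟩)
              = -ccoef n i + ccoef n (i + 1) + ccoef n (i + 2) + -(ccoef n (i + 3)) := by
            rw [groot i hi]
            simp only [hQdef, map_add, map_neg, fhom_Q]
          simp only [Set.mem_setOf_eq, SetLike.mem_coe, AddSubgroup.mem_comap, this,
            cc_g n hn hneven i hi]
          exact zero_mem _
        · have hv' : v = k • Pi.single (⟨n - 2, by omega⟩ : Fin n) (1 : ℤ) := hv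
          subst hv'
          simp only [SetLike.mem_coe, AddSubgroup.mem_comap, ← hQpen, map_zsmul,
            hQdef, fhom_Q, cc_pen n hn hneven]
          rw [smul_eq_mul, Int.mem_zmultiples_iff]
          exact ⟨-1, by ring⟩
      have := hle hmem
      rw [AddSubgroup.mem_comap, map_zsmul, hQdef, fhom_Q, cc_pen n hn hneven,
        Int.mem_zmultiples_iff] at this
      rw [smul_eq_mul] at this
      have h4 : (4 : ℤ) * k ∣ 4 * ((n : ℤ) + 1) := by
        have he : ((n : ℤ) + 1) * (-4 : ℤ) = -(4 * ((n : ℤ) + 1)) := by ring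
        rw [he, dvd_neg] at this
        exact this
      exact (mul_dvd_mul_iff_left (by norm_num : (4 : ℤ) ≠ 0)).mp h4
    · rintro ⟨m, hm⟩
      rw [hQpen]
      have hx : ((n : ℤ) + 1) • ((Pi.single (⟨n - 2, by omega⟩ : Fin n) (1 : ℤ) : Fin n → ℤ))
          = m • (k • (Pi.single (⟨n - 2, by omega⟩ : Fin n) (1 : ℤ) : Fin n → ℤ)) := by
        rw [smul_smul, mul_comm m k]
        exact congrArg (fun z : ℤ => z • (Pi.single (⟨n - 2, by omega⟩ : Fin n) (1 : ℤ) : Fin n → ℤ)) hm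
      rw [hx]
      exact AddSubgroup.zsmul_mem _ hgen m
  constructor
  · rw [hT2]
    constructor
    · intro hdvd
      have : Q n + -Q 1 + Q 2
          = (∑ i ∈ Finset.range (n - 1),
              ((i : ℤ) + 2) • (-Q i + Q (i + 1) + Q (i + 2) + -Q (i + 3)))
            - ((n : ℤ) + 1) • Q (n - 1) := by
        rw [hI]; abel
      rw [this]
      exact sub_mem (hsumgen 2) (hcore.mpr hdvd)
    · intro hmem
      have : ((n : ℤ) + 1) • Q (n - 1)
          = (∑ i ∈ Finset.range (n - 1),
              ((i : ℤ) + 2) • (-Q i + Q (i + 1) + Q (i + 2) + -Q (i + 3)))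
            - (Q n + -Q 1 + Q 2) := by
        rw [hI]; abel
      exact hcore.mp (this ▸ sub_mem (hsumgen 2) hmem)
  · rw [hT3]
    constructor
    · intro hdvd
      have : Q 1 + Q (n - 1) + -Q n
          = ((n : ℤ) + 1) • Q (n - 1)
            - (∑ i ∈ Finset.range (n - 1),
              ((i : ℤ) + 1) • (-Q i + Q (i + 1) + Q (i + 2) + -Q (i + 3))) := by
        rw [hII]; abel
      rw [this]
      exact sub_mem (hcore.mpr hdvd) (hsumgen 1)
    · intro hmem
      have : ((n : ℤ) + 1) • Q (n - 1)
          = (∑ i ∈ Finset.range (n - 1),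
              ((i : ℤ) + 1) • (-Q i + Q (i + 1) + Q (i + 2) + -Q (i + 3)))
            + (Q 1 + Q (n - 1) + -Q n) := by
        rw [hII]; abel
      exact hcore.mp (this ▸ add_mem (hsumgen 1) hmem)
end

section
/- Fix an odd integer n ≥ 3, a positive integer e dividing (n+1)/2, and an integer r with 0 ≤ r ≤ e−1. Let Λ_M be the subgroup of ℤ^n generated by the vectors α_i + α_{i+1} (2 ≤ i ≤ n−1) together with e·e_{n−1} and r·e_{n−1} + e_n. Then both α_2 + α_3 + ⋯ + α_n and α_1 + α_2 + ⋯ + α_{n−1} belong to Λ_M (equivalently, ᾱ_0 + α_1 ∈ Λ_M and ᾱ_0 + α_n ∈ Λ_M). -/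
def Gext (n : ℕ) (i : Fin n) : Fin n → ℤ :=
  if h : 1 ≤ (i : ℕ) ∧ (i : ℕ) + 1 < n then
    ArootA n i + ArootA n ⟨(i : ℕ) + 1, h.2⟩ else 0

lemma sum_ind (n k : ℕ) (f : ℕ → ℤ) :
    (∑ i : Fin n, if (i : ℕ) = k then f (i : ℕ) else 0) = if k < n then f k else 0 := by
  by_cases h : k < n
  · rw [if_pos h, Finset.sum_eq_single (⟨k, h⟩ : Fin n)]
    · simp
    · intro b _ hb
      rw [if_neg (by simpa [Fin.ext_iff] using hb)]
    · simp
  · rw [if_neg h]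
    exact Finset.sum_eq_zero fun i _ => by rw [if_neg (by have := i.2; omega)]

lemma sum_Aroot (n : ℕ) (c : ℕ → ℤ) (j : Fin n) :
    (∑ i : Fin n, c (i : ℕ) * ArootA n i j) =
      (if (j : ℕ) + 1 < n then -c ((j : ℕ) + 1) else 0) + 2 * c (j : ℕ)
      + (if 1 ≤ (j : ℕ) then -c ((j : ℕ) - 1) else 0) := by
  have key : ∀ i : Fin n, c (i : ℕ) * ArootA n i j =
      (if (i : ℕ) = (j : ℕ) + 1 then -c (i : ℕ) else 0)
      + (if (i : ℕ) = (j : ℕ) then 2 * c (i : ℕ) else 0)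
      + (if 1 ≤ (j : ℕ) then (if (i : ℕ) = (j : ℕ) - 1 then -c (i : ℕ) else 0) else 0) := by
    intro i
    have hi := i.2; have hj := j.2
    simp only [ArootA, Fin.ext_iff]
    split_ifs <;> first | omega | (exfalso; omega) | ring1
  rw [Finset.sum_congr rfl fun i _ => key i, Finset.sum_add_distrib,
    Finset.sum_add_distrib, sum_ind n ((j:ℕ)+1) (fun k => -c k),
    sum_ind n (j:ℕ) (fun k => 2 * c k)]
  have hj := j.2
  by_cases h1 : 1 ≤ (j : ℕ)
  · simp only [if_pos h1]
    rw [sum_ind n ((j:ℕ)-1) (fun k => -c k)]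
    split_ifs <;> first | (exfalso; omega) | ring1
  · simp only [if_neg h1, Finset.sum_const_zero]
    split_ifs <;> first | (exfalso; omega) | ring1

lemma sum_Gext (n : ℕ) (c : ℕ → ℤ) (hc0 : c 0 = 0) (hctop : ∀ i, n ≤ i + 1 → c i = 0)
    (j : Fin n) :
    (∑ i : Fin n, c (i : ℕ) * Gext n i j) =
      (if (j : ℕ) + 1 < n then -c ((j : ℕ) + 1) else 0) + c (j : ℕ)
      + (if 1 ≤ (j : ℕ) then c ((j : ℕ) - 1) else 0)
      + (if 2 ≤ (j : ℕ) then -c ((j : ℕ) - 2) else 0) := by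
  have key : ∀ i : Fin n, c (i : ℕ) * Gext n i j =
      (if (i : ℕ) = (j : ℕ) + 1 then -c (i : ℕ) else 0)
      + (if (i : ℕ) = (j : ℕ) then c (i : ℕ) else 0)
      + (if 1 ≤ (j : ℕ) then (if (i : ℕ) = (j : ℕ) - 1 then c (i : ℕ) else 0) else 0)
      + (if 2 ≤ (j : ℕ) then (if (i : ℕ) = (j : ℕ) - 2 then -c (i : ℕ) else 0) else 0) := by
    intro i
    have hi := i.2; have hj := j.2
    by_cases h : 1 ≤ (i : ℕ) ∧ (i : ℕ) + 1 < n
    · rw [Gext, dif_pos h]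
      simp only [Pi.add_apply, ArootA, Fin.ext_iff]
      split_ifs <;> first | omega | (exfalso; omega) | ring1
    · have hci : c (i : ℕ) = 0 := by
        rcases (by omega : (i : ℕ) = 0 ∨ n ≤ (i : ℕ) + 1) with h' | h'
        · rw [h', hc0]
        · exact hctop _ h'
      rw [Gext, dif_neg h, hci]
      split_ifs <;> ring1
  rw [Finset.sum_congr rfl fun i _ => key i, Finset.sum_add_distrib, Finset.sum_add_distrib,
    Finset.sum_add_distrib, sum_ind n ((j:ℕ)+1) (fun k => -c k), sum_ind n (j:ℕ) (fun k => c k)]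
  have hj := j.2
  by_cases h1 : 1 ≤ (j : ℕ) <;> by_cases h2 : 2 ≤ (j : ℕ)
  · simp only [if_pos h1, if_pos h2]
    rw [sum_ind n ((j:ℕ)-1) (fun k => c k), sum_ind n ((j:ℕ)-2) (fun k => -c k)]
    split_ifs <;> first | (exfalso; omega) | ring1
  · simp only [if_pos h1, if_neg h2, Finset.sum_const_zero]
    rw [sum_ind n ((j:ℕ)-1) (fun k => c k)]
    split_ifs <;> first | (exfalso; omega) | ring1
  · omega
  · simp only [if_neg h1, if_neg h2, Finset.sum_const_zero]
    split_ifs <;> first | (exfalso; omega) | ring1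

def cA (i : ℕ) : ℤ := if i ≠ 0 then 1 else 0
def cB (n i : ℕ) : ℤ := if i + 1 < n then 1 else 0
def cOne (n i : ℕ) : ℤ := if i % 2 = 1 ∧ i + 2 ≤ n then 1 else 0
def cTwo (n i : ℕ) : ℤ := if 1 ≤ i ∧ i + 2 ≤ n then -(((i + 1) / 2 : ℕ) : ℤ) else 0


set_option maxHeartbeats 2000000 in
/-- Case `A_n^{(1)}`, `n` odd (`n + 1 = 2d`): let `Λ_M ⊆ ℤ^n` be generated by the
sums of neighboring simple roots `α_i + α_{i+1}` for `2 ≤ i ≤ n-1`, together with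
`e·ω_{n-1}` and `r·ω_{n-1} + ω_n`, where `e ≥ 1` divides `(n+1)/2 = d` and
`0 ≤ r ≤ e - 1`.  Then both `α_2 + ⋯ + α_n = -(ᾱ_0 + α_1)` and
`α_1 + ⋯ + α_{n-1} = -(ᾱ_0 + α_n)` belong to `Λ_M`. -/
theorem model_lattice_An_odd_contains_affine_sums
    (n d : ℕ) (hn : 3 ≤ n) (hnd : n + 1 = 2 * d)
    (e : ℤ) (he : 1 ≤ e) (hed : e ∣ (d : ℤ))
    (r : ℤ) (hr0 : 0 ≤ r) (hre : r ≤ e - 1)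
    (Λ : AddSubgroup (Fin n → ℤ))
    (hΛ : Λ = AddSubgroup.closure
      ({v | ∃ (i : ℕ) (h : i + 1 < n), 1 ≤ i ∧
          v = ArootA n ⟨i, by omega⟩ + ArootA n ⟨i + 1, h⟩} ∪
       {e • Pi.single (⟨n - 2, by omega⟩ : Fin n) (1 : ℤ),
        r • Pi.single (⟨n - 2, by omega⟩ : Fin n) (1 : ℤ) +
          Pi.single (⟨n - 1, by omega⟩ : Fin n) (1 : ℤ)})) :
    (∑ i ∈ Finset.univ.filter (fun i : Fin n => (i : ℕ) ≠ 0), ArootA n i) ∈ Λ ∧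
    (∑ i ∈ Finset.univ.filter (fun i : Fin n => (i : ℕ) + 1 < n), ArootA n i) ∈ Λ := by
  subst hΛ
  have hG : ∀ i : Fin n, Gext n i ∈ AddSubgroup.closure
      ({v | ∃ (i : ℕ) (h : i + 1 < n), 1 ≤ i ∧
          v = ArootA n ⟨i, by omega⟩ + ArootA n ⟨i + 1, h⟩} ∪
       {e • Pi.single (⟨n - 2, by omega⟩ : Fin n) (1 : ℤ),
        r • Pi.single (⟨n - 2, by omega⟩ : Fin n) (1 : ℤ) +
          Pi.single (⟨n - 1, by omega⟩ : Fin n) (1 : ℤ)}) := by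
    intro i
    by_cases h : 1 ≤ (i : ℕ) ∧ (i : ℕ) + 1 < n
    · refine AddSubgroup.subset_closure (Or.inl ⟨(i : ℕ), h.2, h.1, ?_⟩)
      rw [Gext, dif_pos h]
    · rw [Gext, dif_neg h]
      exact zero_mem _
  constructor
  · have hEq : (∑ i ∈ Finset.univ.filter (fun i : Fin n => (i : ℕ) ≠ 0), ArootA n i)
        = ∑ i : Fin n, cOne n (i : ℕ) • Gext n i := by
      funext j
      rw [Finset.sum_apply, Finset.sum_apply, Finset.sum_filter]
      have l1 : ∀ i : Fin n, (if (i : ℕ) ≠ 0 then ArootA n i j else 0)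
          = cA (i : ℕ) * ArootA n i j := by
        intro i; rw [cA]; split_ifs <;> ring1
      rw [Finset.sum_congr rfl fun i _ => l1 i, sum_Aroot n cA j]
      simp only [Pi.smul_apply, smul_eq_mul]
      rw [sum_Gext n (cOne n) (by simp [cOne]) (fun i hi => by simp only [cOne]; rw [if_neg]; omega) j]
      have hj := j.2
      simp only [cA, cOne]
      split_ifs <;> omega
    rw [hEq]
    exact sum_mem fun i _ => zsmul_mem (hG i) _
  · have hu : ((d : ℤ)) • (Pi.single (⟨n - 2, by omega⟩ : Fin n) (1 : ℤ)) ∈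
        AddSubgroup.closure
      ({v | ∃ (i : ℕ) (h : i + 1 < n), 1 ≤ i ∧
          v = ArootA n ⟨i, by omega⟩ + ArootA n ⟨i + 1, h⟩} ∪
       {e • Pi.single (⟨n - 2, by omega⟩ : Fin n) (1 : ℤ),
        r • Pi.single (⟨n - 2, by omega⟩ : Fin n) (1 : ℤ) +
          Pi.single (⟨n - 1, by omega⟩ : Fin n) (1 : ℤ)}) := by
      obtain ⟨m, hm⟩ := hed
      have heq : ((d : ℤ)) • (Pi.single (⟨n - 2, by omega⟩ : Fin n) (1 : ℤ) : Fin n → ℤ)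
          = m • (e • (Pi.single (⟨n - 2, by omega⟩ : Fin n) (1 : ℤ) : Fin n → ℤ)) := by
        have hme : m * e = (d : ℤ) := by rw [hm]; ring
        rw [smul_smul, hme]
      rw [heq]
      exact zsmul_mem (AddSubgroup.subset_closure
        (Set.mem_union_right _ (Set.mem_insert _ _))) m
    have hEq : (∑ i ∈ Finset.univ.filter (fun i : Fin n => (i : ℕ) + 1 < n), ArootA n i)
        = (∑ i : Fin n, cTwo n (i : ℕ) • Gext n i)
          + (d : ℤ) • (Pi.single (⟨n - 2, by omega⟩ : Fin n) (1 : ℤ)) := by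
      funext j
      simp only [Pi.add_apply, Finset.sum_apply, Finset.sum_filter]
      have l1 : ∀ i : Fin n, (if (i : ℕ) + 1 < n then ArootA n i j else 0)
          = cB n (i : ℕ) * ArootA n i j := by
        intro i; rw [cB]; split_ifs <;> ring1
      rw [Finset.sum_congr rfl fun i _ => l1 i, sum_Aroot n (cB n) j]
      simp only [Pi.smul_apply, smul_eq_mul]
      rw [sum_Gext n (cTwo n) (by simp [cTwo]) (fun i hi => by simp only [cTwo]; rw [if_neg]; omega) j]
      have hj := j.2
      rw [Pi.single_apply]
      simp only [cB, cTwo, Fin.ext_iff]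
      split_ifs <;> simp <;> omega
    rw [hEq]
    exact add_mem (sum_mem fun i _ => zsmul_mem (hG i) _) hu
end

section
/- Fix an odd integer n ≥ 3, a positive integer e dividing (n+1)/2, and an integer r with 0 ≤ r ≤ e−1. Let Λ_M be the subgroup of ℤ^n generated by the vectors α_i + α_{i+1} (2 ≤ i ≤ n−1) together with e·e_{n−1} and r·e_{n−1} + e_n; Λ_M is a free ℤ-module of rank n. Consider the linear functionals on ℤ^n given by φ_0(x) = −(x_1 + x_2 + ⋯ + x_n) and φ_j(x) = x_j for j ∈ {2, 4, 6, …, n−1} (these are the pairings with the coroots ᾱ_0^∨, α_2^∨, α_4^∨, …, α_{n−1}^∨ in the fundamental-weight coordinates). Then the restrictions of the (n+1)/2 functionals φ_0, φ_2, φ_4, …, φ_{n−1} to Λ_M form a subset of a ℤ-basis of the dual module Hom_ℤ(Λ_M, ℤ). -/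
/-!
In weight coordinates `α_i + α_{i+1} = (e_i - e_{i-1}) - (e_{i+2} - e_{i+1})`, with
`e_0 = e_{n+1} = 0`, so sums of these generators of equal parity telescope. Combined with
`e·e_{n-1}` and `r·e_{n-1} + e_n` this puts every `e·(e_{i+1} - e_i)`, hence all of `e·ℤ^n`, into
`Λ_M`; thus `Λ_M` is free of rank `n`. The same telescoping sums give explicit preimages of the
standard basis of `ℤ^d` under `(φ_0, φ_2, …, φ_{n-1}) : Λ_M → ℤ^d`. A surjection onto a free
module splits, `Λ_M ≅ ker ⊕ ℤ^d`, and the dual of a basis adapted to this splitting contains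
the `φ`'s.
-/

open Module

theorem sub_add_two_mul_mem {G S : Type*} [AddGroup G] [SetLike S G] [AddSubgroupClass S G]
    {s : S} {g : ℕ → G} {N : ℕ} (h : ∀ m, m + 2 ≤ N → g m - g (m + 2) ∈ s) :
    ∀ k m, m + 2 * k ≤ N → g m - g (m + 2 * k) ∈ s
  | 0, m, _ => by simp
  | k + 1, m, hk => by
    have := add_mem (h m (by omega)) (sub_add_two_mul_mem h k (m + 2) (by omega))
    rwa [sub_add_sub_cancel, show m + 2 + 2 * k = m + 2 * (k + 1) by ring] at this

theorem Submodule.finrank_eq_of_smul_mem {R M : Type*} [CommRing R] [IsDomain R]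
    [IsNoetherianRing R] [AddCommGroup M] [Module R M] [Module.Finite R M]
    [Module.IsTorsionFree R M] {N : Submodule R M} {a : R} (ha : a ≠ 0)
    (h : ∀ x, a • x ∈ N) : finrank R N = finrank R M := by
  refine le_antisymm N.finrank_le (LinearMap.finrank_le_finrank_of_injective
    (f := (a • LinearMap.id).codRestrict N h) fun x y hxy => ?_)
  exact smul_right_injective M ha (congrArg Subtype.val hxy)

theorem Module.exists_basis_dual_of_surjective_pi {R M ι : Type*} [CommRing R] [IsDomain R]
    [IsPrincipalIdealRing R] [AddCommGroup M] [Module R M] [Module.Free R M] [Module.Finite R M]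
    [Fintype ι] [DecidableEq ι] (f : M →ₗ[R] ι → R) (hf : Function.Surjective f) :
    ∃ (m : ℕ) (b : Basis (Fin m ⊕ ι) R (Dual R M)), ∀ i, b (.inr i) = LinearMap.proj i ∘ₗ f := by
  obtain ⟨e, he⟩ := (LinearMap.exact_subtype_ker_map f).splitSurjectiveEquiv
    (Submodule.injective_subtype _) ⟨_, f.splittingOfFunOnFintypeSurjective_splits hf⟩
  obtain ⟨m, bK⟩ := Submodule.basisOfPid (Free.chooseBasis R M) (LinearMap.ker f)
  refine ⟨m, ((bK.dualBasis.prod (Pi.basisFun R ι).dualBasis).map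
    (dualProdDualEquivDual R _ _)).map e.dualMap, fun i => ?_⟩
  ext x
  simp [he.2]

/-- The weight `ω_{m+1}`, i.e. the standard basis vector with 0-based index `m`; it is `0` for
`n ≤ m`, which lets the telescoping identities below run up to the last coordinate. -/
def unitVec (n m : ℕ) : Fin n → ℤ := fun j => if (j : ℕ) = m then 1 else 0

def unitDiff (n m : ℕ) : Fin n → ℤ := unitVec n (m + 1) - unitVec n m

theorem unitVec_of_le {n m : ℕ} (h : n ≤ m) : unitVec n m = 0 := by
  funext j
  simp only [unitVec, Pi.zero_apply, ite_eq_right_iff]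
  omega

theorem sum_unitVec_of_lt {n m : ℕ} (h : m < n) : ∑ j, unitVec n m j = 1 := by
  rw [Finset.sum_eq_single_of_mem ⟨m, h⟩ (Finset.mem_univ _)]
  · simp [unitVec]
  · intro j _ hj
    simp only [unitVec, ite_eq_right_iff]
    exact fun hjm => absurd (Fin.ext hjm) hj

theorem unitVec_val {n : ℕ} (j : Fin n) : unitVec n j = Pi.single j 1 := by
  funext i
  simp [unitVec, Pi.single_apply, Fin.ext_iff]

theorem ArootA_add_ArootA_succ {n : ℕ} (m : ℕ) (h : m + 1 + 1 < n) :
    ArootA n ⟨m + 1, by omega⟩ + ArootA n ⟨m + 1 + 1, h⟩ = unitDiff n m - unitDiff n (m + 2) := by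
  funext j
  simp only [ArootA, unitDiff, unitVec, Pi.add_apply, Pi.sub_apply, Fin.ext_iff]
  split_ifs <;> omega

section

variable {n : ℕ} {e r : ℤ} {Λ : Submodule ℤ (Fin n → ℤ)}

theorem smul_unitDiff_mem (hn : 2 ≤ n)
    (hW : ∀ m, m + 2 < n → unitDiff n m - unitDiff n (m + 2) ∈ Λ)
    (hu : e • unitVec n (n - 2) ∈ Λ) (hv : r • unitVec n (n - 2) + unitVec n (n - 1) ∈ Λ)
    {m : ℕ} (hm : m < n) : e • unitDiff n m ∈ Λ := by
  have hlast : e • unitVec n (n - 1) ∈ Λ := by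
    convert sub_mem (Λ.smul_mem e hv) (Λ.smul_mem r hu) using 1
    module
  have hend : e • unitDiff n (n - 1) ∈ Λ ∧ e • unitDiff n (n - 2) ∈ Λ := by
    rw [unitDiff, unitDiff, show n - 1 + 1 = n by omega, show n - 2 + 1 = n - 1 by omega,
      unitVec_of_le le_rfl, zero_sub, smul_neg, smul_sub]
    exact ⟨neg_mem hlast, sub_mem hlast hu⟩
  obtain ⟨k, hk⟩ : ∃ k, m + 2 * k = n - 1 ∨ m + 2 * k = n - 2 := ⟨(n - 1 - m) / 2, by omega⟩
  have htele := sub_add_two_mul_mem (s := Λ) (N := n - 1) (fun m hm => hW m (by omega)) k m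
    (by omega)
  rw [← sub_add_cancel (unitDiff n m) (unitDiff n (m + 2 * k)), smul_add]
  refine add_mem (Λ.smul_mem e htele) ?_
  rcases hk with hk | hk <;> rw [hk]
  exacts [hend.1, hend.2]

theorem smul_mem_of_generators_mem (hn : 2 ≤ n)
    (hW : ∀ m, m + 2 < n → unitDiff n m - unitDiff n (m + 2) ∈ Λ)
    (hu : e • unitVec n (n - 2) ∈ Λ) (hv : r • unitVec n (n - 2) + unitVec n (n - 1) ∈ Λ)
    (x : Fin n → ℤ) : e • x ∈ Λ := by
  have hvec : ∀ t m, n ≤ m + t → e • unitVec n m ∈ Λ := by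
    intro t
    induction t with
    | zero => intro m hm; simp [unitVec_of_le (show n ≤ m by omega)]
    | succ t ih =>
      intro m hm
      by_cases hmn : n ≤ m
      · simp [unitVec_of_le hmn]
      rw [← sub_sub_cancel (unitVec n (m + 1)) (unitVec n m), smul_sub]
      exact sub_mem (ih (m + 1) (by omega))
        (smul_unitDiff_mem hn hW hu hv (by omega))
  have : ⊤ ≤ Λ.comap (e • LinearMap.id) := by
    rw [← (Pi.basisFun ℤ (Fin n)).span_eq, Submodule.span_le]
    rintro _ ⟨j, rfl⟩
    simpa [← unitVec_val] using hvec (n - j) j (by omega)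
  exact this Submodule.mem_top

theorem surjective_pi_comp_subtype (hn : 3 ≤ n) {d : ℕ} (hnd : n + 1 = 2 * d)
    (hW : ∀ m, m + 2 < n → unitDiff n m - unitDiff n (m + 2) ∈ Λ)
    (hv : r • unitVec n (n - 2) + unitVec n (n - 1) ∈ Λ)
    (φ : Fin d → (Fin n → ℤ) →ₗ[ℤ] ℤ)
    (hφ : ∀ t m, m < n → φ t (unitVec n m) =
      if (t : ℕ) = 0 then -1 else if m + 1 = 2 * t then 1 else 0) :
    Function.Surjective (LinearMap.pi fun t => (φ t).comp Λ.subtype) := by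
  rw [← LinearMap.range_eq_top, eq_top_iff, ← (Pi.basisFun ℤ (Fin d)).span_eq,
    Submodule.span_le]
  rintro _ ⟨s, rfl⟩
  suffices ∃ x ∈ Λ, ∀ t, φ t x = if t = s then 1 else 0 by
    obtain ⟨x, hx, hφx⟩ := this
    exact ⟨⟨x, hx⟩, funext fun t => by simp [hφx, Pi.single_apply]⟩
  have hW' : unitDiff n (n - 3) - unitDiff n (n - 1) ∈ Λ := by
    have := hW (n - 3) (by omega)
    rwa [show n - 3 + 2 = n - 1 by omega] at this
  -- `φ_0 x₀ = 1`, while the other `φ_t` read odd 0-based coordinates, where `x₀` vanishes.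
  have hx₀ : (r - 1) • unitVec n (n - 1) - r • unitVec n (n - 3) ∈ Λ := by
    convert sub_mem (Λ.smul_mem r hW') hv using 1
    rw [unitDiff, unitDiff, show n - 3 + 1 = n - 2 by omega, show n - 1 + 1 = n by omega,
      unitVec_of_le le_rfl]
    module
  have hφ₀ := fun t => hφ t (n - 1) (by omega)
  have hφ₁ := fun t => hφ t (n - 3) (by omega)
  by_cases hs : (s : ℕ) = 0
  · refine ⟨_, hx₀, fun t => ?_⟩
    simp only [map_sub, map_smul, hφ₀, hφ₁, Fin.ext_iff, hs, smul_eq_mul]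
    split_ifs <;> omega
  · have hxs : unitDiff n (2 * (s : ℕ) - 2) - unitDiff n (n - 1) ∈ Λ := by
      have := sub_add_two_mul_mem (s := Λ) (N := n - 1) (fun m hm => hW m (by omega))
        (d - (s : ℕ)) (2 * (s : ℕ) - 2) (by omega)
      rwa [show 2 * (s : ℕ) - 2 + 2 * (d - (s : ℕ)) = n - 1 by omega] at this
    refine ⟨_, add_mem hx₀ hxs, fun t => ?_⟩
    rw [unitDiff, unitDiff, show 2 * (s : ℕ) - 2 + 1 = 2 * (s : ℕ) - 1 by omega,
      show n - 1 + 1 = n by omega, unitVec_of_le le_rfl]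
    simp only [map_add, map_sub, map_smul, map_zero, hφ₀, hφ₁, hφ t (2 * (s : ℕ) - 1) (by omega),
      hφ t (2 * (s : ℕ) - 2) (by omega), Fin.ext_iff, smul_eq_mul]
    split_ifs <;> omega

end

/-- Case `A_n^{(1)}`, `n` odd (`n + 1 = 2d`): let `Λ_M ⊆ ℤ^n` be the submodule
generated by the sums of neighboring simple roots `α_i + α_{i+1}` for
`2 ≤ i ≤ n-1`, together with `e·ω_{n-1}` and `r·ω_{n-1} + ω_n`, where `e ≥ 1`
divides `(n+1)/2 = d` and `0 ≤ r ≤ e-1`.  Then `Λ_M` is free of rank `n`, and the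
restrictions to `Λ_M` of the `d` coroot functionals `ᾱ_0^∨ : x ↦ -(x_1 + ⋯ + x_n)`
and `α_j^∨ : x ↦ x_j` for even `j ∈ {2, 4, …, n-1}` form a subset of a `ℤ`-basis of
the dual module `Hom_ℤ(Λ_M, ℤ)`. -/
theorem even_coroots_part_of_basis_of_dual
    (n d : ℕ) (hn : 3 ≤ n) (hnd : n + 1 = 2 * d)
    (e : ℤ) (he : 1 ≤ e)
    (r : ℤ)
    (Λ : Submodule ℤ (Fin n → ℤ))
    (hΛ : Λ = Submodule.span ℤ
      ({v | ∃ (i : ℕ) (h : i + 1 < n), 1 ≤ i ∧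
          v = ArootA n ⟨i, by omega⟩ + ArootA n ⟨i + 1, h⟩} ∪
       {e • Pi.single (⟨n - 2, by omega⟩ : Fin n) (1 : ℤ),
        r • Pi.single (⟨n - 2, by omega⟩ : Fin n) (1 : ℤ) +
          Pi.single (⟨n - 1, by omega⟩ : Fin n) (1 : ℤ)}))
    (φ : Fin d → ((Fin n → ℤ) →ₗ[ℤ] ℤ))
    (hφ : ∀ (t : Fin d) (x : Fin n → ℤ),
      φ t x = if (t : ℕ) = 0 then -(∑ j, x j)
        else x ⟨2 * (t : ℕ) - 1, by have := t.isLt; omega⟩) :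
    Nonempty (Module.Basis (Fin n) ℤ Λ) ∧
    ∃ (ι : Type) (b : Module.Basis ι ℤ (Λ →ₗ[ℤ] ℤ)) (g : Fin d ↪ ι),
      ∀ t : Fin d, b (g t) = (φ t).comp Λ.subtype := by
  have hW : ∀ m, m + 2 < n → unitDiff n m - unitDiff n (m + 2) ∈ Λ := fun m hm =>
    hΛ ▸ Submodule.subset_span (Or.inl ⟨m + 1, hm, by omega, (ArootA_add_ArootA_succ m hm).symm⟩)
  have hu : e • unitVec n (n - 2) ∈ Λ := by
    rw [hΛ]
    exact Submodule.subset_span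
      (Or.inr (Or.inl (congrArg (e • ·) (unitVec_val ⟨n - 2, by omega⟩))))
  have hv : r • unitVec n (n - 2) + unitVec n (n - 1) ∈ Λ := by
    rw [hΛ]
    exact Submodule.subset_span (Or.inr (Or.inr (congrArg₂ (r • · + ·)
      (unitVec_val ⟨n - 2, by omega⟩) (unitVec_val ⟨n - 1, by omega⟩))))
  have hφ_unitVec : ∀ t m, m < n → φ t (unitVec n m) =
      if (t : ℕ) = 0 then -1 else if m + 1 = 2 * t then 1 else 0 := by
    intro t m hm
    rw [hφ, sum_unitVec_of_lt hm]
    simp only [unitVec]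
    split_ifs <;> omega
  refine ⟨⟨finBasisOfFinrankEq ℤ Λ ?_⟩, ?_⟩
  · rw [Submodule.finrank_eq_of_smul_mem (by omega : e ≠ 0)
      (smul_mem_of_generators_mem (by omega) hW hu hv), finrank_fin_fun]
  · obtain ⟨m, b, hb⟩ := exists_basis_dual_of_surjective_pi _
      (surjective_pi_comp_subtype hn hnd hW hv φ hφ_unitVec)
    exact ⟨_, b, Function.Embedding.inr, fun t => (hb t).trans (LinearMap.proj_pi _ t)⟩
end

section
/- Fix an odd integer n ≥ 3. In ℤ^n, the subgroup generated by the vectors e_i − e_{i+2} (1 ≤ i ≤ n−2) together with e_{n−1} and 2e_n is equal to the subgroup generated by the vectors e_i − e_{i+2} (1 ≤ i ≤ n−2) together with 2e_1 and e_2. (In root-theoretic terms: for n odd, the lattice ℤ(S_0^+ ∪ {2α_n}) generated by α_1+α_2, …, α_{n−1}+α_n, 2α_n equals the lattice generated by 2ᾱ_0, ᾱ_0+α_1, α_1+α_2, …, α_{n−2}+α_{n−1}.) -/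
/-!
Indices are 0-based, as in `Fin n`. Write `L` for the lattice spanned by the differences
`e_i - e_{i+2}`. Telescoping shows that `e_i - e_j ∈ L` whenever `i ≤ j` have the same parity. For `n` odd, the indices `1, n - 2` are
both odd and `0, n - 1` are both even, so the two extra generators on each side agree modulo `L`:
`e_1 ≡ e_{n-2}` and `2e_0 ≡ 2e_{n-1}`. Hence both sides are the same lattice.
-/

namespace AddSubgroup

variable {G : Type*} [AddCommGroup G]

theorem closure_union_pair_le_of_sub_mem {S : Set G} {x y x' y' : G}
    (hx : x' - x ∈ closure S) (hy : y' - y ∈ closure S) :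
    closure (S ∪ {x', y'}) ≤ closure (S ∪ {x, y}) := by
  have hS : closure S ≤ closure (S ∪ {x, y}) := closure_mono Set.subset_union_left
  rw [closure_le]
  rintro z (hz | rfl | rfl)
  · exact subset_closure (Or.inl hz)
  · simpa using add_mem (hS hx) (subset_closure (Or.inr (Or.inl rfl)))
  · simpa using add_mem (hS hy) (subset_closure (Or.inr (Or.inr rfl)))

theorem closure_union_pair_eq_of_sub_mem {S : Set G} {x y x' y' : G}
    (hx : x' - x ∈ closure S) (hy : y' - y ∈ closure S) :
    closure (S ∪ {x, y}) = closure (S ∪ {x', y'}) :=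
  le_antisymm
    (closure_union_pair_le_of_sub_mem (by simpa using neg_mem hx) (by simpa using neg_mem hy))
    (closure_union_pair_le_of_sub_mem hx hy)

end AddSubgroup

def stepTwoDiffs (n : ℕ) : Set (Fin n → ℤ) :=
  {v | ∃ (j : ℕ) (h : j + 2 < n),
    v = Pi.single (⟨j, Nat.lt_of_add_right_lt h⟩ : Fin n) (1 : ℤ) -
      Pi.single (⟨j + 2, h⟩ : Fin n) (1 : ℤ)}

theorem single_sub_single_add_two_mul_mem_closure_stepTwoDiffs {n : ℕ} (j m : ℕ)
    (h : j + 2 * m < n) :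
    Pi.single (⟨j, by omega⟩ : Fin n) (1 : ℤ) - Pi.single (⟨j + 2 * m, h⟩ : Fin n) (1 : ℤ) ∈
      AddSubgroup.closure (stepTwoDiffs n) := by
  induction m with
  | zero => simp
  | succ m ih =>
    have hstep : j + 2 * m + 2 < n := by omega
    have := add_mem (ih (by omega)) (AddSubgroup.subset_closure ⟨_, hstep, rfl⟩)
    rwa [sub_add_sub_cancel] at this

theorem single_sub_single_mem_closure_stepTwoDiffs {n : ℕ} {i j : Fin n} (hij : i ≤ j)
    (hpar : (i : ℕ) % 2 = j % 2) :
    Pi.single i (1 : ℤ) - Pi.single j 1 ∈ AddSubgroup.closure (stepTwoDiffs n) := by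
  have hj : (j : ℕ) = i + 2 * ((j - i) / 2) := by
    have : (i : ℕ) ≤ j := hij
    omega
  convert single_sub_single_add_two_mul_mem_closure_stepTwoDiffs (n := n) i ((j - i) / 2)
    (hj ▸ j.isLt) using 3
  exact Fin.ext hj

/-- Case `D_{n+1}^{(2)}`, `n` odd, in the realization of `B_n` in `ℤ^n` with simple
roots `α_i = e_i − e_{i+1}` (`1 ≤ i ≤ n-1`) and `α_n = e_n` (here `e_1, …, e_n` is
the standard basis, 0-based in Lean): the lattice `ℤ(S_0^+ ∪ {2α_n})`, generated by
`α_1+α_2 = e_1−e_3, …, α_{n-2}+α_{n-1} = e_{n-2}−e_n, α_{n-1}+α_n = e_{n-1}, 2α_n = 2e_n`,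
equals the lattice generated by the vectors `e_i − e_{i+2}` together with
`2ᾱ_0 = −2e_1` and `ᾱ_0+α_1 = −e_2` (up to sign, `2e_1` and `e_2`). -/
theorem lattice_eq_Dn2_odd
    (n : ℕ) (hn : 3 ≤ n) (hodd : Odd n) :
    AddSubgroup.closure
      ({v : Fin n → ℤ | ∃ (j : ℕ) (h : j + 2 < n),
          v = Pi.single (⟨j, by omega⟩ : Fin n) (1 : ℤ) -
            Pi.single (⟨j + 2, h⟩ : Fin n) (1 : ℤ)} ∪
       {Pi.single (⟨n - 2, by omega⟩ : Fin n) (1 : ℤ),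
        (2 : ℤ) • Pi.single (⟨n - 1, by omega⟩ : Fin n) (1 : ℤ)}) =
    AddSubgroup.closure
      ({v : Fin n → ℤ | ∃ (j : ℕ) (h : j + 2 < n),
          v = Pi.single (⟨j, by omega⟩ : Fin n) (1 : ℤ) -
            Pi.single (⟨j + 2, h⟩ : Fin n) (1 : ℤ)} ∪
       {(2 : ℤ) • Pi.single (⟨0, by omega⟩ : Fin n) (1 : ℤ),
        Pi.single (⟨1, by omega⟩ : Fin n) (1 : ℤ)}) := by
  obtain ⟨k, rfl⟩ := hodd
  change AddSubgroup.closure (stepTwoDiffs _ ∪ _) = AddSubgroup.closure (stepTwoDiffs _ ∪ _)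
  rw [Set.pair_comm]
  refine AddSubgroup.closure_union_pair_eq_of_sub_mem ?_ ?_
  · rw [← smul_sub]
    exact zsmul_mem (single_sub_single_mem_closure_stepTwoDiffs (Fin.mk_le_mk.2 (by omega))
      (by simp)) 2
  · exact single_sub_single_mem_closure_stepTwoDiffs (Fin.mk_le_mk.2 (by omega)) (by simp; omega)
end
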